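/- Let G be a gyrogroup equipped with a metric d that is invariant under left gyrotranslation: d(a ⊕ x, a ⊕ y) = d(x, y) for all a, x, y ∈ G. Then ‖x‖ := d(e, x) defines a gyronorm on G, and the gyronorm metric it induces coincides with d: d(x, y) = ‖⊖x ⊕ y‖ for all x, y ∈ G. -/

import Mathlib

/-!
Translating by `x` shows `d(x, y) = d(e, ⊖x ⊕ y)`, so `d` is recovered from `‖·‖ = d(e, ·)`.
The metric axioms then give the gyronorm axioms; for invariance under `gyr[a, b]`, translate
`gyr[a, b] x` by `a ⊕ b`, where left gyroassociativity turns `(a ⊕ b) ⊕ gyr[a, b] x` into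
`a ⊕ (b ⊕ x)`, and peel off the translations by `a` and `b`.
-/

/-- A gyrogroup: a set with a binary operation `add`, identity `e`, inversion `neg`,
and gyroautomorphisms `gyr` satisfying the gyrogroup axioms. -/
structure Gyrogroup (G : Type*) where
  add : G → G → G
  e : G
  neg : G → G
  gyr : G → G → G → G
  e_add : ∀ a, add e a = a
  add_e : ∀ a, add a e = a
  neg_add : ∀ a, add (neg a) a = e
  add_neg : ∀ a, add a (neg a) = e
  gyr_bijective : ∀ a b, Function.Bijective (gyr a b)
  gyr_add : ∀ a b x y, gyr a b (add x y) = add (gyr a b x) (gyr a b y)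
  left_gyroassoc : ∀ a b c, add a (add b c) = add (add a b) (gyr a b c)
  left_loop : ∀ a b, gyr (add a b) b = gyr a b

/-- A gyronorm on a gyrogroup. -/
structure Gyronorm {G : Type*} (gg : Gyrogroup G) where
  toFun : G → ℝ
  nonneg : ∀ x, 0 ≤ toFun x
  eq_zero_iff : ∀ x, toFun x = 0 ↔ x = gg.e
  neg_eq : ∀ x, toFun (gg.neg x) = toFun x
  subadd : ∀ x y, toFun (gg.add x y) ≤ toFun x + toFun y
  gyr_eq : ∀ a b x, toFun (gg.gyr a b x) = toFun x

namespace Gyrogroup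

variable {G : Type*} (gg : Gyrogroup G)

theorem add_left_cancel (a : G) {x y : G} (h : gg.add a x = gg.add a y) : x = y := by
  have h' : gg.add (gg.neg a) (gg.add a x) = gg.add (gg.neg a) (gg.add a y) := by rw [h]
  rw [gg.left_gyroassoc, gg.left_gyroassoc, gg.neg_add, gg.e_add, gg.e_add] at h'
  exact (gg.gyr_bijective _ _).1 h'

theorem gyr_e_left (b c : G) : gg.gyr gg.e b c = c := by
  have h := gg.left_gyroassoc gg.e b c
  rw [gg.e_add, gg.e_add] at h
  exact gg.add_left_cancel b h.symm

theorem gyr_neg_right (a c : G) : gg.gyr a (gg.neg a) c = c := by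
  rw [← gg.left_loop, gg.add_neg, gg.gyr_e_left]

theorem add_neg_cancel_left (x y : G) : gg.add x (gg.add (gg.neg x) y) = y := by
  rw [gg.left_gyroassoc, gg.add_neg, gg.e_add, gg.gyr_neg_right]

section LeftInvariant

variable {gg} {α : Type*} {d : G → G → α} (hinv : ∀ a x y, d (gg.add a x) (gg.add a y) = d x y)
include hinv

theorem dist_eq_dist_e_neg_add (x y : G) : d x y = d gg.e (gg.add (gg.neg x) y) := by
  simpa only [gg.add_e, gg.add_neg_cancel_left] using hinv x gg.e (gg.add (gg.neg x) y)

theorem dist_self_add (x y : G) : d x (gg.add x y) = d gg.e y := by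
  simpa only [gg.add_e] using hinv x gg.e y

theorem dist_e_neg (x : G) : d gg.e (gg.neg x) = d x gg.e := by
  simpa only [gg.add_e, gg.add_neg] using (hinv x gg.e (gg.neg x)).symm

theorem dist_e_gyr (a b x : G) : d gg.e (gg.gyr a b x) = d gg.e x := by
  rw [← dist_self_add hinv (gg.add a b), ← gg.left_gyroassoc, hinv, dist_self_add hinv]

end LeftInvariant

end Gyrogroup

def Gyronorm.ofLeftInvariantMetric {G : Type*} (gg : Gyrogroup G) (d : G → G → ℝ)
    (hnonneg : ∀ x y, 0 ≤ d x y) (heq : ∀ x y, d x y = 0 ↔ x = y)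
    (hsymm : ∀ x y, d x y = d y x) (htri : ∀ x y z, d x z ≤ d x y + d y z)
    (hinv : ∀ a x y, d (gg.add a x) (gg.add a y) = d x y) : Gyronorm gg where
  toFun x := d gg.e x
  nonneg _ := hnonneg _ _
  eq_zero_iff _ := (heq _ _).trans eq_comm
  neg_eq x := (gg.dist_e_neg hinv x).trans (hsymm _ _)
  subadd x y := (htri _ x _).trans_eq (by rw [gg.dist_self_add hinv])
  gyr_eq := gg.dist_e_gyr hinv

/-- If a gyrogroup carries a metric `d` invariant under left gyrotranslations, then
`‖x‖ := d(e, x)` is a gyronorm whose induced gyronorm metric coincides with `d`. -/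
theorem left_invariant_metric_gives_gyronorm {G : Type*} (gg : Gyrogroup G)
    (d : G → G → ℝ)
    (hnonneg : ∀ x y, 0 ≤ d x y)
    (heq : ∀ x y, d x y = 0 ↔ x = y)
    (hsymm : ∀ x y, d x y = d y x)
    (htri : ∀ x y z, d x z ≤ d x y + d y z)
    (hinv : ∀ a x y, d (gg.add a x) (gg.add a y) = d x y) :
    ∃ nm : Gyronorm gg, (∀ x, nm.toFun x = d gg.e x) ∧
      (∀ x y, d x y = nm.toFun (gg.add (gg.neg x) y)) :=
  ⟨.ofLeftInvariantMetric gg d hnonneg heq hsymm htri hinv, fun _ => rfl,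
    gg.dist_eq_dist_e_neg_add hinv⟩
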